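/- arXiv:0803.2183 — 6 statements merged into one kernel-verified Lean document; each statement's English description precedes it below -/
import Mathlib

section
/- Let τ be a row-standard tableau (a filling of a Young diagram with 1,…,n such that entries increase left to right along rows). If one rearranges the entries in each column of τ into increasing order from top to bottom, the resulting tableau st(τ) is a standard tableau: its rows still increase to the right and its columns increase to the bottom. -/
/-!
Fix a cell `(i, j + 1)` and put `v = σ (i, j + 1)`. Since column `j + 1` of `σ` is sorted, its
rows `0, …, i` hold entries `≤ v`; column `j + 1` of `τ` has the same entries, so at least `i + 1`
of its cells hold entries `≤ v`. As the rows of `τ` increase, the cell to the left of each of them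
holds an entry `< v`, so column `j` of `τ`, and hence of `σ`, has at least `i + 1` entries `< v`.
Column `j` of `σ` being sorted, these fill its rows `0, …`, so `σ (i, j) < v`.
-/

open Finset

section MonotoneCount

variable {α : Type*} [LinearOrder α] {f : ℕ → α} {L i : ℕ}

theorem le_card_filter_range_le (hf : MonotoneOn f (Set.Iio L)) (hi : i < L) :
    i + 1 ≤ #{r ∈ range L | f r ≤ f i} := by
  have hsub : range (i + 1) ⊆ {r ∈ range L | f r ≤ f i} := by
    intro r hr
    simp only [mem_filter, mem_range] at hr ⊢
    exact ⟨by omega, hf (Set.mem_Iio.2 (by omega)) hi (by omega)⟩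
  simpa using card_le_card hsub

theorem lt_of_lt_card_filter_range_lt (hf : MonotoneOn f (Set.Iio L)) (hi : i < L) {v : α}
    (hcard : i < #{r ∈ range L | f r < v}) : f i < v := by
  by_contra! hv
  have hsub : {r ∈ range L | f r < v} ⊆ range i := by
    intro r hr
    simp only [mem_filter, mem_range] at hr ⊢
    by_contra! hir
    exact (hv.trans (hf hi hr.1 hir)).not_gt hr.2
  simpa using (card_le_card hsub).trans_lt' hcard

end MonotoneCount

namespace YoungDiagram

variable {α : Type*} {Y : YoungDiagram} {τ σ : ℕ × ℕ → α}

theorem card_filter_range_colLen_eq_countP (Y : YoungDiagram) (f : ℕ × ℕ → α) (j : ℕ)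
    (p : α → Prop) [DecidablePred p] :
    #{r ∈ range (Y.colLen j) | p (f (r, j))} = ((Y.col j).val.map f).countP p := by
  rw [Multiset.countP_map, ← filter_val, card_val, col_eq_prod, product_singleton, filter_map,
    card_map]
  rfl

theorem card_filter_range_colLen_congr {j : ℕ} (h : (Y.col j).val.map σ = (Y.col j).val.map τ)
    (p : α → Prop) [DecidablePred p] :
    #{r ∈ range (Y.colLen j) | p (σ (r, j))} = #{r ∈ range (Y.colLen j) | p (τ (r, j))} := by
  rw [card_filter_range_colLen_eq_countP, card_filter_range_colLen_eq_countP, h]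

theorem monotoneOn_col_of_lt [Preorder α] {j : ℕ}
    (hcol : ∀ i₁ i₂, (i₁, j) ∈ Y → (i₂, j) ∈ Y → i₁ < i₂ → σ (i₁, j) < σ (i₂, j)) :
    MonotoneOn (fun r => σ (r, j)) (Set.Iio (Y.colLen j)) :=
  StrictMonoOn.monotoneOn fun _ ha _ hb hab =>
    hcol _ _ (mem_iff_lt_colLen.2 ha) (mem_iff_lt_colLen.2 hb) hab

theorem lt_right_of_col_sorted [LinearOrder α]
    (hrow : ∀ i j₁ j₂ : ℕ, (i, j₁) ∈ Y → (i, j₂) ∈ Y → j₁ < j₂ → τ (i, j₁) < τ (i, j₂))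
    (hcolperm : ∀ j, (Y.col j).val.map σ = (Y.col j).val.map τ)
    (hσcol : ∀ i₁ i₂ j : ℕ, (i₁, j) ∈ Y → (i₂, j) ∈ Y → i₁ < i₂ → σ (i₁, j) < σ (i₂, j))
    {i j : ℕ} (hij : (i, j + 1) ∈ Y) : σ (i, j) < σ (i, j + 1) := by
  set v := σ (i, j + 1)
  have hleft : (i, j) ∈ Y := Y.up_left_mem le_rfl j.le_succ hij
  have hshift : #{r ∈ range (Y.colLen (j + 1)) | τ (r, j + 1) ≤ v}
      ≤ #{r ∈ range (Y.colLen j) | τ (r, j) < v} := by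
    refine card_le_card fun r hr => ?_
    simp only [mem_filter, mem_range, ← mem_iff_lt_colLen] at hr ⊢
    have hr' : (r, j) ∈ Y := Y.up_left_mem le_rfl j.le_succ hr.1
    exact ⟨hr', (hrow r j (j + 1) hr' hr.1 j.lt_succ_self).trans_le hr.2⟩
  refine lt_of_lt_card_filter_range_lt (monotoneOn_col_of_lt (hσcol · · j))
    (mem_iff_lt_colLen.1 hleft) (Nat.lt_of_succ_le ?_)
  calc i + 1 ≤ #{r ∈ range (Y.colLen (j + 1)) | σ (r, j + 1) ≤ v} :=
        le_card_filter_range_le (monotoneOn_col_of_lt (hσcol · · (j + 1)))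
          (mem_iff_lt_colLen.1 hij)
    _ = #{r ∈ range (Y.colLen (j + 1)) | τ (r, j + 1) ≤ v} :=
        card_filter_range_colLen_congr (hcolperm (j + 1)) (· ≤ v)
    _ ≤ #{r ∈ range (Y.colLen j) | τ (r, j) < v} := hshift
    _ = #{r ∈ range (Y.colLen j) | σ (r, j) < v} :=
        (card_filter_range_colLen_congr (hcolperm j) (· < v)).symm

end YoungDiagram

theorem stmt_0_general (Y : YoungDiagram) (τ σ : ℕ × ℕ → ℕ)
    (hrow : ∀ i j₁ j₂ : ℕ, (i, j₁) ∈ Y → (i, j₂) ∈ Y → j₁ < j₂ → τ (i, j₁) < τ (i, j₂))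
    (hcolperm : ∀ j : ℕ,
      Multiset.map σ (Y.cells.filter (fun c => c.2 = j)).val =
        Multiset.map τ (Y.cells.filter (fun c => c.2 = j)).val)
    (hσcol : ∀ i₁ i₂ j : ℕ, (i₁, j) ∈ Y → (i₂, j) ∈ Y → i₁ < i₂ → σ (i₁, j) < σ (i₂, j)) :
    (∀ i j₁ j₂ : ℕ, (i, j₁) ∈ Y → (i, j₂) ∈ Y → j₁ < j₂ → σ (i, j₁) < σ (i, j₂)) ∧
      (∀ i₁ i₂ j : ℕ, (i₁, j) ∈ Y → (i₂, j) ∈ Y → i₁ < i₂ → σ (i₁, j) < σ (i₂, j)) := by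
  refine ⟨fun i j₁ j₂ h₁ h₂ hlt => ?_, hσcol⟩
  have hmono : StrictMonoOn (fun j => σ (i, j)) (Set.Iio (Y.rowLen i)) :=
    strictMonoOn_of_lt_succ Set.ordConnected_Iio fun j _ _ hsucc =>
      YoungDiagram.lt_right_of_col_sorted hrow hcolperm hσcol
        (YoungDiagram.mem_iff_lt_rowLen.2 hsucc)
  exact hmono (YoungDiagram.mem_iff_lt_rowLen.1 h₁) (YoungDiagram.mem_iff_lt_rowLen.1 h₂) hlt

/-- column-sorting a row-standard tableau yields a standard tableau.
`τ` is a row-standard tableau of shape `Y` (a bijective filling of the cells by `1,…,n`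
with rows increasing to the right).  `σ` is a filling whose columns carry the same
multisets of entries as those of `τ` (so `σ = st(τ)` after sorting) and whose columns
increase downwards.  Then the rows of `σ` still increase to the right and its columns
increase to the bottom, i.e. `σ` is a standard tableau. -/
theorem stmt_0 (Y : YoungDiagram) (τ σ : ℕ × ℕ → ℕ)
    (hbij : Set.BijOn τ ↑Y.cells (Set.Icc 1 Y.card))
    (hrow : ∀ i j₁ j₂ : ℕ, (i, j₁) ∈ Y → (i, j₂) ∈ Y → j₁ < j₂ → τ (i, j₁) < τ (i, j₂))
    (hcolperm : ∀ j : ℕ,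
      Multiset.map σ (Y.cells.filter (fun c => c.2 = j)).val =
        Multiset.map τ (Y.cells.filter (fun c => c.2 = j)).val)
    (hσcol : ∀ i₁ i₂ j : ℕ, (i₁, j) ∈ Y → (i₂, j) ∈ Y → i₁ < i₂ → σ (i₁, j) < σ (i₂, j)) :
    (∀ i j₁ j₂ : ℕ, (i, j₁) ∈ Y → (i, j₂) ∈ Y → j₁ < j₂ → σ (i, j₁) < σ (i, j₂)) ∧
      (∀ i₁ i₂ j : ℕ, (i₁, j) ∈ Y → (i₂, j) ∈ Y → i₁ < i₂ → σ (i₁, j) < σ (i₂, j)) :=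
  stmt_0_general Y τ σ hrow hcolperm hσcol
end

section
/- In the hook case, the necessary dominance condition characterizes membership combinatorially: let T be a standard tableau and τ a row-standard tableau, both of a common hook shape with n boxes, with first-row entries a₁ < … < a_s of T and a'₁ < … < a'_s of τ. If Y_{j/i}(τ) ⪯ Y^T_{j/i} for all 0 ≤ i < j ≤ n, then a'_{q−1} < a_q ≤ a'_q for every q ∈ {2,…,s}. -/
/-- hook case, dominance ⇒ interleaving.  A standard tableau `T` of hook
shape with `n` boxes is encoded by its first row `a : Fin s → ℕ` and first column
`b : Fin r → ℕ` (both strictly increasing, starting at `1`, partitioning `{1,…,n}` and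
meeting only in `1`, with `n + 1 = r + s`).  A row-standard tableau `τ` of the same
shape is encoded by its first row `a' : Fin s → ℕ`.  Since all the diagrams
`Y_{j/i}(τ)` and `Y^T_{j/i}` are hooks with `j − i` boxes, the dominance relation
`Y_{j/i}(τ) ⪯ Y^T_{j/i}` is equivalent to the comparison of first-row lengths; by
Greene's theorem the first-row length of the jeu-de-taquin rectification `Y^T_{j/i}` is
the longest increasing subsequence of the reading word, namely
`max (#R) (sup_{p ∈ C} (1 + #{q ∈ R : a_q > b_p}))`, where `R` (resp. `C`) is the set of
first-row (resp. first-column, excluding the corner) entries lying in `(i, j]`.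
Conclusion: `a'_{q−1} < a_q ≤ a'_q` for all `q ∈ {2,…,s}`. -/
theorem stmt_8 (n r s : ℕ) (hs : 0 < s) (hr : 0 < r) (hn : n + 1 = r + s)
    (a : Fin s → ℕ) (b : Fin r → ℕ) (a' : Fin s → ℕ)
    (ha : StrictMono a) (hb : StrictMono b) (ha' : StrictMono a')
    (ha0 : a ⟨0, hs⟩ = 1) (hb0 : b ⟨0, hr⟩ = 1)
    (hmem : ∀ k : ℕ, 1 ≤ k → k ≤ n → (∃ q, a q = k) ∨ (∃ p, b p = k))
    (hsep : ∀ q p, a q = b p → a q = 1)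
    (han : ∀ q, a q ≤ n) (hbn : ∀ p, b p ≤ n)
    (ha'1 : ∀ q, 1 ≤ a' q) (ha'n : ∀ q, a' q ≤ n)
    (hdom : ∀ i j : ℕ, i < j → j ≤ n →
      (Finset.univ.filter fun q : Fin s => i < a' q ∧ a' q ≤ j).card ≤
        max
          (Finset.univ.filter fun q : Fin s => i < a q ∧ a q ≤ j).card
          ((Finset.univ.filter fun p : Fin r => (p : ℕ) ≠ 0 ∧ i < b p ∧ b p ≤ j).sup
            fun p => 1 + (Finset.univ.filter
              fun q : Fin s => i < a q ∧ a q ≤ j ∧ b p < a q).card)) :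
    ∀ q q' : Fin s, (q' : ℕ) + 1 = (q : ℕ) → a' q' < a q ∧ a q ≤ a' q := by
  intro q q' hq
  have hq1 : (0 : ℕ) < (q : ℕ) := by omega
  have haq1 : 1 < a q := by
    have h0 := ha (show (⟨0, hs⟩ : Fin s) < q from Fin.lt_def.mpr (by simpa using hq1))
    omega
  constructor
  · -- a' q' < a q
    by_contra hcon
    push_neg at hcon  -- a q ≤ a' q'
    have hd := hdom (a q - 1) n (by have := han q; omega) le_rfl
    -- LHS ≥ s - q'
    have hL : (Finset.Ici q').card ≤
        (Finset.univ.filter fun q'' : Fin s => a q - 1 < a' q'' ∧ a' q'' ≤ n).card := by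
      apply Finset.card_le_card
      intro x hx
      simp only [Finset.mem_Ici] at hx
      simp only [Finset.mem_filter, Finset.mem_univ, true_and]
      have : a' q' ≤ a' x := ha'.monotone hx
      exact ⟨by omega, ha'n x⟩
    rw [Fin.card_Ici] at hL
    -- first branch ≤ s - q
    have hA : (Finset.univ.filter fun q'' : Fin s => a q - 1 < a q'' ∧ a q'' ≤ n).card
        ≤ s - (q : ℕ) := by
      have hsub : (Finset.univ.filter fun q'' : Fin s => a q - 1 < a q'' ∧ a q'' ≤ n)
          ⊆ Finset.Ici q := by
        intro x hx
        simp only [Finset.mem_filter, Finset.mem_univ, true_and] at hx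
        simp only [Finset.mem_Ici]
        exact ha.le_iff_le.mp (by omega)
      have := Finset.card_le_card hsub
      rwa [Fin.card_Ici] at this
    -- second branch ≤ s - q
    have hB : ((Finset.univ.filter fun p : Fin r =>
          (p : ℕ) ≠ 0 ∧ a q - 1 < b p ∧ b p ≤ n).sup
          fun p => 1 + (Finset.univ.filter
            fun q'' : Fin s => a q - 1 < a q'' ∧ a q'' ≤ n ∧ b p < a q'').card)
        ≤ s - (q : ℕ) := by
      apply Finset.sup_le
      intro p hp
      simp only [Finset.mem_filter, Finset.mem_univ, true_and] at hp
      have hbpq : a q < b p := by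
        rcases lt_or_eq_of_le (show a q ≤ b p by omega) with h | h
        · exact h
        · exact absurd (hsep q p h) (by omega)
      have hsub : (Finset.univ.filter
            fun q'' : Fin s => a q - 1 < a q'' ∧ a q'' ≤ n ∧ b p < a q'')
          ⊆ (Finset.Ici q).erase q := by
        intro x hx
        simp only [Finset.mem_filter, Finset.mem_univ, true_and] at hx
        have hgt : a q < a x := by omega
        have hlt : q < x := ha.lt_iff_lt.mp hgt
        simp only [Finset.mem_erase, Finset.mem_Ici]
        exact ⟨Fin.ne_of_gt hlt, le_of_lt hlt⟩
      have hcard := Finset.card_le_card hsub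
      rw [Finset.card_erase_of_mem (Finset.mem_Ici.mpr le_rfl), Fin.card_Ici] at hcard
      have : (q : ℕ) < s := q.isLt
      omega
    have : (q : ℕ) < s := q.isLt
    have hmax := max_le hA hB
    omega
  · -- a q ≤ a' q
    have hd := hdom 0 (a' q) (ha'1 q) (ha'n q)
    -- LHS ≥ q + 1
    have hL : (Finset.Iic q).card ≤
        (Finset.univ.filter fun q'' : Fin s => 0 < a' q'' ∧ a' q'' ≤ a' q).card := by
      apply Finset.card_le_card
      intro x hx
      simp only [Finset.mem_Iic] at hx
      simp only [Finset.mem_filter, Finset.mem_univ, true_and]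
      exact ⟨ha'1 x, ha'.monotone hx⟩
    rw [Fin.card_Iic] at hL
    set A := Finset.univ.filter fun q'' : Fin s => 0 < a q'' ∧ a q'' ≤ a' q with hAdef
    have h0A : (⟨0, hs⟩ : Fin s) ∈ A := by
      simp only [hAdef, Finset.mem_filter, Finset.mem_univ, true_and, ha0]
      exact ⟨one_pos, ha'1 q⟩
    -- sup branch ≤ #A
    have hB : ((Finset.univ.filter fun p : Fin r =>
          (p : ℕ) ≠ 0 ∧ 0 < b p ∧ b p ≤ a' q).sup
          fun p => 1 + (Finset.univ.filter
            fun q'' : Fin s => 0 < a q'' ∧ a q'' ≤ a' q ∧ b p < a q'').card)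
        ≤ A.card := by
      apply Finset.sup_le
      intro p hp
      simp only [Finset.mem_filter, Finset.mem_univ, true_and] at hp
      have hbp1 : 1 < b p := by
        have := hb (show (⟨0, hr⟩ : Fin r) < p from
          Fin.lt_def.mpr (by simpa using Nat.pos_of_ne_zero hp.1))
        omega
      have hsub : (Finset.univ.filter
            fun q'' : Fin s => 0 < a q'' ∧ a q'' ≤ a' q ∧ b p < a q'')
          ⊆ A.erase ⟨0, hs⟩ := by
        intro x hx
        simp only [Finset.mem_filter, Finset.mem_univ, true_and] at hx
        have hx0 : x ≠ ⟨0, hs⟩ := by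
          intro h; rw [h, ha0] at hx; omega
        simp only [Finset.mem_erase, hAdef, Finset.mem_filter, Finset.mem_univ, true_and]
        exact ⟨hx0, hx.1, hx.2.1⟩
      have hcard := Finset.card_le_card hsub
      rw [Finset.card_erase_of_mem h0A] at hcard
      have hApos : 0 < A.card := Finset.card_pos.mpr ⟨_, h0A⟩
      omega
    have hmax := max_le (le_refl A.card) hB
    have hq1A : (q : ℕ) + 1 ≤ A.card := le_trans hL (le_trans hd hmax)
    -- conclude: some index ≥ q lies in A
    by_contra hcon
    push_neg at hcon  -- a' q < a q
    have hsub : A ⊆ Finset.Iio q := by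
      intro x hx
      simp only [hAdef, Finset.mem_filter, Finset.mem_univ, true_and] at hx
      simp only [Finset.mem_Iio]
      exact ha.lt_iff_lt.mp (by omega)
    have := Finset.card_le_card hsub
    rw [Fin.card_Iio] at this
    omega
end

section
/- Conversely in the hook case: with T standard and τ row-standard of a common hook shape, first-row entries a₁<…<a_s (of T) and a'₁<…<a'_s (of τ), if a'_{q−1} < a_q ≤ a'_q for all q ∈ {2,…,s}, then Y_{j/i}(τ) ⪯ Y^T_{j/i} for all 0 ≤ i < j ≤ n. -/
/-- hook case, interleaving ⇒ dominance (converse of Statement 8, with the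
same encoding of the hook tableaux `T` (first row `a`, first column `b`) and `τ`
(first row `a'`), and of the hooks `Y_{j/i}(τ)` and `Y^T_{j/i}` via first-row lengths,
the latter computed by Greene's theorem).  If `a'_{q−1} < a_q ≤ a'_q` for all
`q ∈ {2,…,s}`, then `Y_{j/i}(τ) ⪯ Y^T_{j/i}` for all `0 ≤ i < j ≤ n`. -/
theorem stmt_9 (n r s : ℕ) (hs : 0 < s) (hr : 0 < r) (hn : n + 1 = r + s)
    (a : Fin s → ℕ) (b : Fin r → ℕ) (a' : Fin s → ℕ)
    (ha : StrictMono a) (hb : StrictMono b) (ha' : StrictMono a')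
    (ha0 : a ⟨0, hs⟩ = 1) (hb0 : b ⟨0, hr⟩ = 1)
    (hmem : ∀ k : ℕ, 1 ≤ k → k ≤ n → (∃ q, a q = k) ∨ (∃ p, b p = k))
    (hsep : ∀ q p, a q = b p → a q = 1)
    (han : ∀ q, a q ≤ n) (hbn : ∀ p, b p ≤ n)
    (ha'1 : ∀ q, 1 ≤ a' q) (ha'n : ∀ q, a' q ≤ n)
    (hintl : ∀ q q' : Fin s, (q' : ℕ) + 1 = (q : ℕ) → a' q' < a q ∧ a q ≤ a' q) :
    ∀ i j : ℕ, i < j → j ≤ n →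
      (Finset.univ.filter fun q : Fin s => i < a' q ∧ a' q ≤ j).card ≤
        max
          (Finset.univ.filter fun q : Fin s => i < a q ∧ a q ≤ j).card
          ((Finset.univ.filter fun p : Fin r => (p : ℕ) ≠ 0 ∧ i < b p ∧ b p ≤ j).sup
            fun p => 1 + (Finset.univ.filter
              fun q : Fin s => i < a q ∧ a q ≤ j ∧ b p < a q).card) := by
  intro i j hij hjn
  set A : Finset (Fin s) := Finset.univ.filter fun q : Fin s => i < a q ∧ a q ≤ j with hA
  set A' : Finset (Fin s) := Finset.univ.filter fun q : Fin s => i < a' q ∧ a' q ≤ j with hA'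
  -- a q ≤ a' q for all q
  have hle : ∀ q : Fin s, a q ≤ a' q := by
    intro q
    rcases Nat.eq_zero_or_pos (q : ℕ) with h0 | hpos
    · have hq0 : q = ⟨0, hs⟩ := Fin.ext h0
      rw [hq0, ha0]; exact ha'1 _
    · exact (hintl q ⟨(q : ℕ) - 1, by omega⟩ (by simp; omega)).2
  by_cases hAe : A' = ∅
  · simp [hAe]
  have hne : A'.Nonempty := Finset.nonempty_iff_ne_empty.mpr hAe
  set u : Fin s := A'.min' hne with hu_def
  have hu : u ∈ A' := A'.min'_mem hne
  have humin : ∀ q ∈ A', u ≤ q := fun q hq => A'.min'_le q hq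
  have huA' : i < a' u ∧ a' u ≤ j := by
    have := hu; rw [hA', Finset.mem_filter] at this; exact this.2
  -- every element of A' other than u lies in A
  have herase : ∀ q ∈ A', q ≠ u → q ∈ A := by
    intro q hq hqu
    have hq' : i < a' q ∧ a' q ≤ j := by
      rw [hA', Finset.mem_filter] at hq; exact hq.2
    have hlt : u < q := lt_of_le_of_ne (humin q hq) (Ne.symm hqu)
    have hqpos : 0 < (q : ℕ) := lt_of_le_of_lt (Nat.zero_le _) (Fin.lt_def.mp hlt)
    set q' : Fin s := ⟨(q : ℕ) - 1, by omega⟩ with hq'def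
    have hintq := hintl q q' (by simp [hq'def]; omega)
    have huq' : u ≤ q' := by
      rw [Fin.le_def]; simp [hq'def]
      have := Fin.lt_def.mp hlt; omega
    have h1 : a' u ≤ a' q' := ha'.monotone huq'
    rw [hA, Finset.mem_filter]
    refine ⟨Finset.mem_univ _, ?_, ?_⟩
    · omega
    · exact le_trans (hle q) hq'.2
  have hcard1 : A'.card ≤ A.card + 1 := by
    have hsub : A'.erase u ⊆ A := by
      intro q hq
      rw [Finset.mem_erase] at hq
      exact herase q hq.2 hq.1
    have := Finset.card_le_card hsub
    have h2 : (A'.erase u).card = A'.card - 1 := Finset.card_erase_of_mem hu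
    have h3 : 1 ≤ A'.card := Finset.card_pos.mpr hne
    omega
  by_cases huA : u ∈ A
  · -- then A' ⊆ A
    refine le_trans ?_ (le_max_left _ _)
    apply Finset.card_le_card
    intro q hq
    by_cases hqu : q = u
    · rw [hqu]; exact huA
    · exact herase q hq hqu
  · -- a u ≤ i, so i ≥ 1, and i+1 must be some b p
    have haui : a u ≤ i := by
      rw [hA, Finset.mem_filter] at huA
      have hle' : a u ≤ j := le_trans (hle u) huA'.2
      simp at huA
      omega
    have hau1 : 1 ≤ a u := by
      have : a ⟨0, hs⟩ ≤ a u := ha.monotone (by rw [Fin.le_def]; simp)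
      omega
    have hi1 : 1 ≤ i := by omega
    -- no a q equals i + 1, and moreover q ∈ A implies a q ≥ i + 2
    have hgap : ∀ q : Fin s, a q ≤ i ∨ i + 2 ≤ a q := by
      intro q
      rcases le_or_gt (q : ℕ) (u : ℕ) with hqu | hqu
      · left
        exact le_trans (ha.monotone (Fin.le_def.mpr hqu)) haui
      · right
        set q' : Fin s := ⟨(q : ℕ) - 1, by omega⟩ with hq'def
        have hintq := hintl q q' (by simp [hq'def]; omega)
        have huq' : u ≤ q' := by rw [Fin.le_def]; simp [hq'def]; omega
        have h1 : a' u ≤ a' q' := ha'.monotone huq'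
        omega
    obtain hca | ⟨p, hp⟩ := hmem (i + 1) (by omega) (by omega)
    · exfalso
      obtain ⟨q, hq⟩ := hca
      rcases hgap q with h | h <;> omega
    · have hp0 : (p : ℕ) ≠ 0 := by
        intro h0
        have : p = ⟨0, hr⟩ := Fin.ext h0
        rw [this, hb0] at hp
        omega
      refine le_trans ?_ (le_max_right _ _)
      have hpmem : p ∈ Finset.univ.filter fun p : Fin r => (p : ℕ) ≠ 0 ∧ i < b p ∧ b p ≤ j := by
        rw [Finset.mem_filter]
        exact ⟨Finset.mem_univ _, hp0, by omega, by omega⟩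
      refine le_trans ?_ (Finset.le_sup hpmem)
      have hfeq : (Finset.univ.filter fun q : Fin s => i < a q ∧ a q ≤ j ∧ b p < a q) = A := by
        rw [hA]
        apply Finset.filter_congr
        intro q _
        simp only [and_congr_right_iff, iff_self_and]
        intro h1
        rcases hgap q with h | h <;> omega
      rw [hfeq]
      omega
end

section
/- Let T be a standard tableau with two rows and n boxes, with second-row entries b₁ < … < b_s. Define a*₁ = b₁ − 1 and inductively a*_q = max{x ∈ (first-row entries of T) \ {a*₁,…,a*_{q−1}} : x < b_q}. Then this recursion is well defined (the maximum is over a nonempty set) and a*_q < b_q for each q; moreover the pairs (a*_q, b_q) are pairwise disjoint and each a*_q is a first-row entry of T. -/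
noncomputable def cupF (A : Finset ℕ) (b' : ℕ → ℕ) (q : ℕ) : ℕ :=
  ((A.filter (fun x => x < b' q ∧ ∀ q' : Fin q, cupF A b' q'.val ≠ x)).max).getD 0
termination_by q
decreasing_by all_goals exact Fin.is_lt _

lemma cup_key (A : Finset ℕ) (b' : ℕ → ℕ) (q : ℕ)
    (hcard : q + 1 ≤ (A.filter (fun x => x < b' q)).card) :
    cupF A b' q ∈ A ∧ cupF A b' q < b' q ∧
      (∀ q' < q, cupF A b' q' ≠ cupF A b' q) ∧
      ∀ x ∈ A, x < b' q → (∀ q' < q, cupF A b' q' ≠ x) → x ≤ cupF A b' q := by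
  classical
  set S := A.filter (fun x => x < b' q ∧ ∀ q' : Fin q, cupF A b' q'.val ≠ x) with hSdef
  set T := A.filter (fun x => x < b' q) with hTdef
  set F := (Finset.range q).image (cupF A b') with hFdef
  have hsub : T \ F ⊆ S := by
    intro x hx
    rw [Finset.mem_sdiff] at hx
    rw [hTdef, Finset.mem_filter] at hx
    rw [hSdef, Finset.mem_filter]
    refine ⟨hx.1.1, hx.1.2, ?_⟩
    intro q' hq'
    exact hx.2 (Finset.mem_image.mpr ⟨q'.val, Finset.mem_range.mpr q'.isLt, hq'⟩)
  have hF : F.card ≤ q := le_trans Finset.card_image_le (by simp)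
  have hT : T.card ≤ (T \ F).card + F.card := Finset.card_le_card_sdiff_add_card
  have hSne : S.Nonempty := by
    have : 1 ≤ (T \ F).card := by omega
    exact Finset.Nonempty.mono hsub (Finset.card_pos.mp (by omega))
  have heq : cupF A b' q = S.max' hSne := by
    rw [cupF]
    rw [← hSdef, ← Finset.coe_max' hSne]
    rfl
  have hmem := S.max'_mem hSne
  rw [← heq] at hmem
  rw [hSdef, Finset.mem_filter] at hmem
  refine ⟨hmem.1, hmem.2.1, fun q' hq' => hmem.2.2 ⟨q', hq'⟩, ?_⟩
  intro x hxA hxb hxprev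
  have hxS : x ∈ S := by
    rw [hSdef, Finset.mem_filter]
    exact ⟨hxA, hxb, fun q' => hxprev q'.val q'.isLt⟩
  rw [heq]
  exact S.le_max' x hxS

/-- the cup-diagram recursion is well defined.  A two-row standard tableau
`T` with rows of lengths `r ≥ s`, `n = r + s`, is encoded by its first row
`a : Fin r → ℕ` and second row `b : Fin s → ℕ` (strictly increasing, disjoint,
partitioning `{1,…,n}`, with the column condition `a_q < b_q`).  There exists a map
`astar : Fin s → ℕ` with `astar 0 = b 0 − 1`, which is injective (so that the arcs
`(astar_q, b_q)` are pairwise disjoint), and such that each `astar q` is the greatest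
first-row entry `< b q` not used at an earlier step; in particular each `astar q` is a
first-row entry of `T` and `astar q < b q`. -/
theorem stmt_11 (n r s : ℕ) (hrs : s ≤ r) (hn : n = r + s)
    (a : Fin r → ℕ) (b : Fin s → ℕ)
    (ha : StrictMono a) (hb : StrictMono b)
    (hdisj : ∀ p q, a p ≠ b q)
    (hunion : ∀ k : ℕ, (1 ≤ k ∧ k ≤ n) ↔ ((∃ p, a p = k) ∨ (∃ q, b q = k)))
    (hcol : ∀ q : Fin s, a (Fin.castLE hrs q) < b q) :
    ∃ astar : Fin s → ℕ,
      Function.Injective astar ∧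
      (∀ h : 0 < s, astar ⟨0, h⟩ = b ⟨0, h⟩ - 1) ∧
      ∀ q : Fin s,
        (∃ p, a p = astar q) ∧ astar q < b q ∧
          ∀ x : ℕ, (∃ p, a p = x) → x < b q →
            (∀ q' : Fin s, q' < q → astar q' ≠ x) → x ≤ astar q := by
  classical
  set A : Finset ℕ := Finset.image a Finset.univ with hA
  set b' : ℕ → ℕ := fun m => if h : m < s then b ⟨m, h⟩ else 0 with hb'
  have hb'eq : ∀ q : Fin s, b' q.val = b q := by
    intro q
    simp [hb', q.isLt]
  have key : ∀ q : Fin s,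
      cupF A b' q.val ∈ A ∧ cupF A b' q.val < b' q.val ∧
        (∀ q' < q.val, cupF A b' q' ≠ cupF A b' q.val) ∧
        ∀ x ∈ A, x < b' q.val → (∀ q' < q.val, cupF A b' q' ≠ x) → x ≤ cupF A b' q.val := by
    intro q
    apply cup_key
    -- show q.val + 1 ≤ card of first-row entries below b q
    have hinj : Function.Injective (fun i : Fin (q.val + 1) =>
        a ⟨i.val, lt_of_le_of_lt (Nat.lt_succ_iff.mp i.isLt) (lt_of_lt_of_le q.isLt hrs)⟩) := by
      intro i j hij
      have := ha.injective hij
      exact Fin.ext (show i.val = j.val from congrArg (fun z : Fin r => z.val) this)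
    have hsub : Finset.image (fun i : Fin (q.val + 1) =>
        a ⟨i.val, lt_of_le_of_lt (Nat.lt_succ_iff.mp i.isLt) (lt_of_lt_of_le q.isLt hrs)⟩)
        Finset.univ ⊆ A.filter (fun x => x < b' q.val) := by
      intro x hx
      rw [Finset.mem_image] at hx
      obtain ⟨i, _, rfl⟩ := hx
      rw [Finset.mem_filter]
      constructor
      · exact Finset.mem_image.mpr ⟨_, Finset.mem_univ _, rfl⟩
      · rw [hb'eq]
        calc a _ ≤ a (Fin.castLE hrs q) := ha.monotone (by
              simp [Fin.le_def, Nat.lt_succ_iff.mp i.isLt])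
          _ < b q := hcol q
    calc q.val + 1 = (Finset.univ : Finset (Fin (q.val + 1))).card := by simp
      _ = _ := (Finset.card_image_of_injective _ hinj).symm
      _ ≤ _ := Finset.card_le_card hsub
  refine ⟨fun q => cupF A b' q.val, ?_, ?_, ?_⟩
  · -- injectivity
    intro q1 q2 h
    by_contra hne
    rcases lt_or_gt_of_ne (fun hv : q1.val = q2.val => hne (Fin.ext hv)) with hlt | hlt
    · exact (key q2).2.2.1 q1.val hlt h
    · exact (key q1).2.2.1 q2.val hlt h.symm
  · -- astar 0 = b 0 - 1
    intro h
    set q0 : Fin s := ⟨0, h⟩ with hq0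
    have k := key q0
    have ha0 : 1 ≤ a (Fin.castLE hrs q0) :=
      ((hunion _).mpr (Or.inl ⟨_, rfl⟩)).1
    have hb0 : 2 ≤ b q0 := lt_of_le_of_lt ha0 (hcol q0)
    have hbn : b q0 ≤ n := ((hunion _).mpr (Or.inr ⟨q0, rfl⟩)).2
    have hmemA : b q0 - 1 ∈ A := by
      rcases (hunion (b q0 - 1)).mp ⟨by omega, by omega⟩ with ⟨p, hp⟩ | ⟨q', hq'⟩
      · exact Finset.mem_image.mpr ⟨p, Finset.mem_univ _, hp⟩
      · exfalso
        have : b q' < b q0 := by omega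
        have : q' < q0 := hb.lt_iff_lt.mp this
        exact absurd this (by simp [hq0, Fin.lt_def])
    have hlt : cupF A b' q0.val < b q0 := by
      have := k.2.1; rwa [hb'eq] at this
    have hge : b q0 - 1 ≤ cupF A b' q0.val := by
      apply k.2.2.2 _ hmemA
      · rw [hb'eq]; omega
      · intro q' hq'
        exact absurd hq' (by simp [hq0])
    show cupF A b' q0.val = b q0 - 1
    omega
  · -- main properties
    intro q
    have k := key q
    refine ⟨?_, ?_, ?_⟩
    · obtain ⟨p, _, hp⟩ := Finset.mem_image.mp k.1
      exact ⟨p, hp⟩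
    · have := k.2.1; rwa [hb'eq] at this
    · intro x hx hxb hxprev
      apply k.2.2.2 x
      · obtain ⟨p, hp⟩ := hx
        exact Finset.mem_image.mpr ⟨p, Finset.mem_univ _, hp⟩
      · rwa [hb'eq]
      · intro q' hq'
        exact hxprev ⟨q', lt_trans hq' q.isLt⟩ (by simpa [Fin.lt_def] using hq')
end

section
/- Let T, S be standard tableaux of the same two-row shape with rows of lengths r ≥ s. If the meander M_{T,S} (superimposing the cup-diagram of T drawn above and of S drawn below the points 1,…,n) has s−1 closed loops, then the second rows of T and S share at least s−1 common entries; equivalently, all entries of the first row of T except at most one also lie in the first row of S. -/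
open scoped Classical

/-- The meander graph `M_{T,S}` on the points `ℕ`: edges are the cup-diagram arcs
`(cT q, bT q)` of `T` (drawn above) and `(cS q, bS q)` of `S` (drawn below). -/
def meander {s : ℕ} (cT bT cS bS : Fin s → ℕ) : SimpleGraph ℕ :=
  SimpleGraph.fromRel fun x y =>
    (∃ q, cT q = x ∧ bT q = y) ∨ (∃ q, cS q = x ∧ bS q = y)

/-- A point is matched in a cup diagram if it is an endpoint of one of its arcs. -/
def matched {s : ℕ} (c b : Fin s → ℕ) (v : ℕ) : Prop :=
  ∃ q, c q = v ∨ b q = v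

/-- `v` lies on a closed loop of the meander: every point of its connected component is
an endpoint of an arc of both cup diagrams (components of the meander are paths or
loops, and the loops are exactly the components all of whose vertices have degree 2). -/
def inLoop {s : ℕ} (cT bT cS bS : Fin s → ℕ) (v : ℕ) : Prop :=
  ∀ w, (meander cT bT cS bS).Reachable v w → matched cT bT w ∧ matched cS bS w

/-!
The rightmost point `m` of a loop of `M_{T,S}` is a right endpoint in both cup diagrams: every
point of a loop is an endpoint of an arc of `T` and of `S`, and if `m` were the left end of an
arc, its right end would be a point of the same loop further to the right. Distinct loops have
distinct rightmost points, so the loops inject into the common entries of the second rows.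
-/

lemma SimpleGraph.exists_reachable_isGreatest {G : SimpleGraph ℕ} {v : ℕ}
    (hfin : {w | G.Reachable v w}.Finite) :
    ∃ m, G.Reachable v m ∧ ∀ w, G.Reachable v w → w ≤ m :=
  ⟨sSup {w | G.Reachable v w}, Nat.sSup_mem ⟨v, .refl v⟩ hfin.bddAbove,
    fun _ hw => le_csSup hfin.bddAbove hw⟩

lemma exists_right_eq_of_matched_of_reachable_max {s : ℕ} {G : SimpleGraph ℕ} {c b : Fin s → ℕ}
    (hadj : ∀ q, G.Adj (c q) (b q)) (hlt : ∀ q, c q < b q) {v m : ℕ} (hm : G.Reachable v m)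
    (hmax : ∀ w, G.Reachable v w → w ≤ m) (hmatch : matched c b m) : ∃ q, b q = m := by
  obtain ⟨q, hq | hq⟩ := hmatch
  · subst hq
    exact absurd (hmax _ (hm.trans (hadj q).reachable)) (hlt q).not_ge
  · exact ⟨q, hq⟩

section Meander

variable {s : ℕ} {cT bT cS bS : Fin s → ℕ}

lemma meander_adj_of_ne_left {q : Fin s} (h : cT q ≠ bT q) :
    (meander cT bT cS bS).Adj (cT q) (bT q) :=
  (SimpleGraph.fromRel_adj _ _ _).2 ⟨h, Or.inl (Or.inl ⟨q, rfl, rfl⟩)⟩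

lemma meander_adj_of_ne_right {q : Fin s} (h : cS q ≠ bS q) :
    (meander cT bT cS bS).Adj (cS q) (bS q) :=
  (SimpleGraph.fromRel_adj _ _ _).2 ⟨h, Or.inl (Or.inr ⟨q, rfl, rfl⟩)⟩

lemma inLoop.finite_reachable {v : ℕ} (hv : inLoop cT bT cS bS v) :
    {w | (meander cT bT cS bS).Reachable v w}.Finite := by
  refine ((Set.finite_range cT).union (Set.finite_range bT)).subset fun w hw => ?_
  obtain ⟨q, hq | hq⟩ := (hv w hw).1
  · exact Or.inl ⟨q, hq⟩
  · exact Or.inr ⟨q, hq⟩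

lemma inLoop.exists_reachable_right_endpoint_both
    (hT : ∀ q, cT q < bT q) (hS : ∀ q, cS q < bS q) {v : ℕ} (hv : inLoop cT bT cS bS v) :
    ∃ m, (meander cT bT cS bS).Reachable v m ∧ (∃ q, bT q = m) ∧ ∃ q, bS q = m := by
  obtain ⟨m, hm, hmax⟩ := SimpleGraph.exists_reachable_isGreatest hv.finite_reachable
  exact ⟨m, hm,
    exists_right_eq_of_matched_of_reachable_max (fun q => meander_adj_of_ne_left (hT q).ne) hT hm hmax
      (hv m hm).1,
    exists_right_eq_of_matched_of_reachable_max (fun q => meander_adj_of_ne_right (hS q).ne) hS hm hmax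
      (hv m hm).2⟩

end Meander

theorem stmt_18_general (n r s : ℕ)
    (aT : Fin r → ℕ) (bT : Fin s → ℕ) (aS : Fin r → ℕ) (bS : Fin s → ℕ)
    (cT cS : Fin s → ℕ)
    (hcTchar : ∀ q : Fin s,
      (∃ p, aT p = cT q) ∧ cT q < bT q ∧
        ∀ x : ℕ, (∃ p, aT p = x) → x < bT q →
          (∀ q' : Fin s, q' < q → cT q' ≠ x) → x ≤ cT q)
    (hcSchar : ∀ q : Fin s,
      (∃ p, aS p = cS q) ∧ cS q < bS q ∧
        ∀ x : ℕ, (∃ p, aS p = x) → x < bS q →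
          (∀ q' : Fin s, q' < q → cS q' ≠ x) → x ≤ cS q)
    (hloops :
      ((Finset.Icc 1 n).filter fun v =>
          inLoop cT bT cS bS v ∧ matched cT bT v ∧ matched cS bS v ∧
            ∀ w < v, ¬ (meander cT bT cS bS).Reachable v w).card = s - 1) :
    s - 1 ≤ ((Finset.univ.image bT) ∩ (Finset.univ.image bS)).card := by
  have hrightmost : ∀ v, inLoop cT bT cS bS v → ∃ m, (meander cT bT cS bS).Reachable v m ∧
      (∃ q, bT q = m) ∧ ∃ q, bS q = m :=
    fun v => inLoop.exists_reachable_right_endpoint_both (fun q => (hcTchar q).2.1)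
      (fun q => (hcSchar q).2.1)
  choose! rightmost hreach hbT hbS using hrightmost
  rw [← hloops]
  refine Finset.card_le_card_of_injOn rightmost (fun v hv => ?_) fun v hv v' hv' heq => ?_
  · obtain ⟨-, hloop, -⟩ := Finset.mem_filter.1 hv
    simp only [Finset.coe_inter, Finset.coe_image, Finset.coe_univ, Set.image_univ]
    exact ⟨hbT v hloop, hbS v hloop⟩
  · obtain ⟨-, hloop, -, -, hmin⟩ := Finset.mem_filter.1 hv
    obtain ⟨-, hloop', -, -, hmin'⟩ := Finset.mem_filter.1 hv'
    have hvv' := (hreach v hloop).trans (heq ▸ (hreach v' hloop').symm)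
    by_contra hne
    rcases Nat.lt_or_gt_of_ne hne with h | h
    · exact hmin' v h hvv'.symm
    · exact hmin v' h hvv'

/-- let `T`, `S` be standard tableaux of the same two-row shape with rows
of lengths `r ≥ s`, `n = r + s`, encoded by their rows `aT, bT` and `aS, bS`, with cup
diagrams given by the greedy matchings `cT` (arcs `(cT q, bT q)`) and `cS`.  If the
meander `M_{T,S}` has exactly `s − 1` closed loops (counted by their least points),
then the second rows of `T` and `S` share at least `s − 1` common entries. -/
theorem stmt_18 (n r s : ℕ) (hrs : s ≤ r) (hn : n = r + s)
    (aT : Fin r → ℕ) (bT : Fin s → ℕ) (aS : Fin r → ℕ) (bS : Fin s → ℕ)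
    (haT : StrictMono aT) (hbT : StrictMono bT) (haS : StrictMono aS) (hbS : StrictMono bS)
    (hdisjT : ∀ p q, aT p ≠ bT q) (hdisjS : ∀ p q, aS p ≠ bS q)
    (hunionT : ∀ k : ℕ, (1 ≤ k ∧ k ≤ n) ↔ ((∃ p, aT p = k) ∨ (∃ q, bT q = k)))
    (hunionS : ∀ k : ℕ, (1 ≤ k ∧ k ≤ n) ↔ ((∃ p, aS p = k) ∨ (∃ q, bS q = k)))
    (hcolT : ∀ q : Fin s, aT (Fin.castLE hrs q) < bT q)
    (hcolS : ∀ q : Fin s, aS (Fin.castLE hrs q) < bS q)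
    (cT cS : Fin s → ℕ)
    (hcTinj : Function.Injective cT) (hcSinj : Function.Injective cS)
    (hcT0 : ∀ h : 0 < s, cT ⟨0, h⟩ = bT ⟨0, h⟩ - 1)
    (hcS0 : ∀ h : 0 < s, cS ⟨0, h⟩ = bS ⟨0, h⟩ - 1)
    (hcTchar : ∀ q : Fin s,
      (∃ p, aT p = cT q) ∧ cT q < bT q ∧
        ∀ x : ℕ, (∃ p, aT p = x) → x < bT q →
          (∀ q' : Fin s, q' < q → cT q' ≠ x) → x ≤ cT q)
    (hcSchar : ∀ q : Fin s,
      (∃ p, aS p = cS q) ∧ cS q < bS q ∧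
        ∀ x : ℕ, (∃ p, aS p = x) → x < bS q →
          (∀ q' : Fin s, q' < q → cS q' ≠ x) → x ≤ cS q)
    (hloops :
      ((Finset.Icc 1 n).filter fun v =>
          inLoop cT bT cS bS v ∧ matched cT bT v ∧ matched cS bS v ∧
            ∀ w < v, ¬ (meander cT bT cS bS).Reachable v w).card = s - 1) :
    s - 1 ≤ ((Finset.univ.image bT) ∩ (Finset.univ.image bS)).card :=
  stmt_18_general n r s aT bT aS bS cT cS hcTchar hcSchar hloops
end

section
/- Let T, S be two distinct standard tableaux of a common two-row shape. Then there exist 0 ≤ i < j ≤ n such that Y^T_{j/i} strictly precedes Y^S_{j/i} in dominance order or Y^S_{j/i} strictly precedes Y^T_{j/i}; more precisely, if Y^S_{j/i} ⪯ Y^T_{j/i} for all pairs i < j, then T = S. -/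
/-!
By Greene's theorem the first row of `Y_{j/i}` is the longest reading chain among the entries in
`(i, j]`. In a two-row tableau such a chain is made of second-row entries up to some `s` followed
by first-row entries above `s`. Writing `p m = 2 a m - m` for the ballot path of the tableau,
where `a m` counts first-row entries `≤ m`, its length is `(p i + p j + j - i) / 2 - min_{[i, j]} p`.
So the hypothesis says `q i + q j - 2 min q ≤ p i + p j - 2 min p` for the paths `p` of `T` and
`q` of `S`. Taking `i = 0` puts `q` weakly below `p`. If the paths differ, take the first
excursion `[m, j]` of `q` strictly below `p`: both paths have unit steps and meet at `m` and `j`,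
so the minimum of `q` on `[m, j]` is strictly below that of `p`, contradicting the inequality for
`(m, j)`. Equal paths give equal row counts, and these determine a standard tableau.
-/

open scoped Classical

/-- A standard tableau of shape `Y`: a bijective filling of the cells by `1,…,n` whose
rows increase to the right and whose columns increase to the bottom. -/
def IsStandardTableau (Y : YoungDiagram) (f : ℕ × ℕ → ℕ) : Prop :=
  Set.BijOn f ↑Y.cells (Set.Icc 1 Y.card) ∧
    (∀ i j₁ j₂ : ℕ, (i, j₁) ∈ Y → (i, j₂) ∈ Y → j₁ < j₂ → f (i, j₁) < f (i, j₂)) ∧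
    (∀ i₁ i₂ j : ℕ, (i₁, j) ∈ Y → (i₂, j) ∈ Y → i₁ < i₂ → f (i₁, j) < f (i₂, j))

/-- `c` comes strictly before `c'` in the (bottom-to-top, left-to-right) reading order. -/
def ReadLT (c c' : ℕ × ℕ) : Prop := c'.1 < c.1 ∨ (c.1 = c'.1 ∧ c.2 < c'.2)

/-- Greene invariant of the entries in `(i, j]` of the reading word of `(Y, f)`:
the maximal total size of `k` pairwise disjoint increasing subsequences. -/
noncomputable def greene (Y : YoungDiagram) (f : ℕ × ℕ → ℕ) (i j k : ℕ) : ℕ :=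
  sSup {m : ℕ | ∃ C : Fin k → Finset (ℕ × ℕ),
    (∀ l, C l ⊆ Y.cells) ∧
    (∀ l l', l ≠ l' → Disjoint (C l) (C l')) ∧
    (∀ l, ∀ c ∈ C l, i < f c ∧ f c ≤ j) ∧
    (∀ l, ∀ c ∈ C l, ∀ c' ∈ C l, c ≠ c' →
      (ReadLT c c' ∧ f c < f c') ∨ (ReadLT c' c ∧ f c' < f c)) ∧
    m = ∑ l, (C l).card}

/-- By Greene's theorem, `Z` is the rectified shape `Y^f_{j/i}` of the skew subtableau
of `(Y, f)` with entries `i+1,…,j` iff its partial row sums equal the Greene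
invariants. -/
def IsRectifiedShape (Y : YoungDiagram) (f : ℕ × ℕ → ℕ) (i j : ℕ) (Z : YoungDiagram) :
    Prop :=
  ∀ k : ℕ, ∑ l ∈ Finset.range k, Z.rowLen l = greene Y f i j k

open Finset

def entryWindow (Y : YoungDiagram) (f : ℕ × ℕ → ℕ) (i j : ℕ) : Finset (ℕ × ℕ) :=
  Y.cells.filter fun c => i < f c ∧ f c ≤ j

def rowWindow (Y : YoungDiagram) (f : ℕ × ℕ → ℕ) (r i j : ℕ) : Finset (ℕ × ℕ) :=
  (entryWindow Y f i j).filter fun c => c.1 = r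

def rowCount (Y : YoungDiagram) (f : ℕ × ℕ → ℕ) (r m : ℕ) : ℕ :=
  #(rowWindow Y f r 0 m)

section Windows

variable {Y : YoungDiagram} {f : ℕ × ℕ → ℕ} {c : ℕ × ℕ} {r i s j k : ℕ}

@[simp]
lemma mem_entryWindow : c ∈ entryWindow Y f i j ↔ c ∈ Y.cells ∧ i < f c ∧ f c ≤ j :=
  mem_filter

@[simp]
lemma mem_rowWindow : c ∈ rowWindow Y f r i j ↔ c ∈ Y.cells ∧ (i < f c ∧ f c ≤ j) ∧ c.1 = r := by
  simp only [rowWindow, mem_filter, mem_entryWindow, and_assoc]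

@[simp]
lemma rowWindow_self : rowWindow Y f r i i = ∅ := by
  ext c
  simp only [mem_rowWindow, notMem_empty, iff_false]
  omega

@[simp]
lemma rowCount_zero : rowCount Y f r 0 = 0 := by
  simp [rowCount]

lemma card_rowWindow_add (his : i ≤ s) (hsj : s ≤ j) :
    #(rowWindow Y f r i s) + #(rowWindow Y f r s j) = #(rowWindow Y f r i j) := by
  rw [← card_union_of_disjoint]
  · congr 1
    ext c
    simp only [mem_union, mem_rowWindow]
    constructor
    · rintro (⟨hc, hv, hr⟩ | ⟨hc, hv, hr⟩) <;> exact ⟨hc, by omega, hr⟩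
    · rintro ⟨hc, hv, hr⟩
      rcases le_or_gt (f c) s with h | h
      exacts [.inl ⟨hc, by omega, hr⟩, .inr ⟨hc, by omega, hr⟩]
  · refine disjoint_left.2 fun c hc hc' => ?_
    simp only [mem_rowWindow] at hc hc'
    omega

lemma card_entryWindow_eq_sum (hk : ∀ c ∈ Y.cells, c.1 < k) :
    #(entryWindow Y f i j) = ∑ r ∈ range k, #(rowWindow Y f r i j) :=
  card_eq_sum_card_fiberwise fun c hc => mem_range.2 (hk c (mem_entryWindow.1 hc).1)

lemma card_entryWindow_eq_add (htr : ∀ c ∈ Y.cells, c.1 ≤ 1) :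
    #(entryWindow Y f i j) = #(rowWindow Y f 0 i j) + #(rowWindow Y f 1 i j) := by
  rw [card_entryWindow_eq_sum (k := 2) fun c hc => Nat.lt_succ_of_le (htr c hc)]
  simp [sum_range_succ]

end Windows

namespace IsStandardTableau

variable {Y : YoungDiagram} {f g : ℕ × ℕ → ℕ} {c c' : ℕ × ℕ} {i j m : ℕ}

lemma pos (hf : IsStandardTableau Y f) (hc : c ∈ Y.cells) : 0 < f c :=
  (hf.1.mapsTo hc).1

lemma le_card (hf : IsStandardTableau Y f) (hc : c ∈ Y.cells) : f c ≤ Y.card :=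
  (hf.1.mapsTo hc).2

lemma lt_of_fst_eq (hf : IsStandardTableau Y f) (hc : c ∈ Y.cells) (hc' : c' ∈ Y.cells)
    (h₁ : c.1 = c'.1) (h₂ : c.2 < c'.2) : f c < f c' := by
  obtain ⟨a, b⟩ := c
  obtain ⟨a', b'⟩ := c'
  subst h₁
  exact hf.2.1 a b b' (by simpa using hc) (by simpa using hc') h₂

lemma le_of_fst_eq (hf : IsStandardTableau Y f) (hc : c ∈ Y.cells) (hc' : c' ∈ Y.cells)
    (h₁ : c.1 = c'.1) (h₂ : c.2 ≤ c'.2) : f c ≤ f c' := by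
  rcases h₂.lt_or_eq with h₂ | h₂
  · exact (hf.lt_of_fst_eq hc hc' h₁ h₂).le
  · rw [Prod.ext h₁ h₂]

lemma lt_of_snd_eq (hf : IsStandardTableau Y f) (hc : c ∈ Y.cells) (hc' : c' ∈ Y.cells)
    (h₂ : c.2 = c'.2) (h₁ : c.1 < c'.1) : f c < f c' := by
  obtain ⟨a, b⟩ := c
  obtain ⟨a', b'⟩ := c'
  subst h₂
  exact hf.2.2 a a' b (by simpa using hc) (by simpa using hc') h₁

lemma card_entryWindow (hf : IsStandardTableau Y f) (hj : j ≤ Y.card) :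
    #(entryWindow Y f i j) = j - i := by
  rw [← Nat.card_Ioc]
  refine card_nbij f (fun c hc => ?_) (hf.1.injOn.mono fun c hc => ?_) fun v hv => ?_
  · simpa using (mem_entryWindow.1 hc).2
  · exact (mem_entryWindow.1 hc).1
  · obtain ⟨hiv, hvj⟩ : i < v ∧ v ≤ j := by simpa using hv
    obtain ⟨c, hc, rfl⟩ := hf.1.surjOn (Set.mem_Icc.2 ⟨by omega, by omega⟩ : v ∈ Set.Icc 1 Y.card)
    exact ⟨c, mem_entryWindow.2 ⟨hc, hiv, hvj⟩, rfl⟩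

lemma rowCount_succ (hf : IsStandardTableau Y f) (r m : ℕ) :
    rowCount Y f r (m + 1) = rowCount Y f r m ∨ rowCount Y f r (m + 1) = rowCount Y f r m + 1 := by
  have hsplit := card_rowWindow_add (Y := Y) (f := f) (r := r) (Nat.zero_le m) (Nat.le_add_right m 1)
  have hle : #(rowWindow Y f r m (m + 1)) ≤ 1 := card_le_one.2 fun c hc c' hc' => by
    simp only [mem_rowWindow] at hc hc'
    exact hf.1.injOn hc.1 hc'.1 (by omega)
  unfold rowCount
  omega

lemma rowCount_card (hf : IsStandardTableau Y f) (r : ℕ) : rowCount Y f r Y.card = Y.rowLen r := by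
  rw [rowCount, Y.rowLen_eq_card]
  congr 1
  ext c
  simp only [mem_rowWindow, YoungDiagram.row, mem_filter]
  exact ⟨fun h => ⟨h.1, h.2.2⟩, fun h => ⟨h.1, ⟨hf.pos h.1, hf.le_card h.1⟩, h.2⟩⟩

lemma rowCount_succ_le (hf : IsStandardTableau Y f) (r m : ℕ) :
    rowCount Y f (r + 1) m ≤ rowCount Y f r m := by
  refine card_le_card_of_injOn (fun c => (r, c.2)) (fun c hc => ?_) fun c hc c' hc' h => ?_
  · simp only [mem_coe, mem_rowWindow] at hc ⊢
    obtain ⟨hc, hv, hr⟩ := hc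
    have hmem : (r, c.2) ∈ Y.cells := Y.up_left_mem (by omega) le_rfl hc
    have := hf.lt_of_snd_eq hmem hc rfl (by omega)
    have := hf.pos hmem
    exact ⟨hmem, by omega, trivial⟩
  · simp only [mem_coe, mem_rowWindow, Prod.mk.injEq] at hc hc' h
    exact Prod.ext (by omega) h.2


lemma rowCount_zero_add_rowCount_one (hf : IsStandardTableau Y f)
    (htr : ∀ c ∈ Y.cells, c.1 ≤ 1) (hm : m ≤ Y.card) :
    rowCount Y f 0 m + rowCount Y f 1 m = m := by
  rw [rowCount, rowCount, ← card_entryWindow_eq_add htr, hf.card_entryWindow hm, Nat.sub_zero]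

lemma le_two_mul_rowCount_zero (hf : IsStandardTableau Y f) (htr : ∀ c ∈ Y.cells, c.1 ≤ 1)
    (hm : m ≤ Y.card) : m ≤ 2 * rowCount Y f 0 m := by
  have : rowCount Y f 1 m ≤ rowCount Y f 0 m := hf.rowCount_succ_le 0 m
  have := hf.rowCount_zero_add_rowCount_one htr hm
  omega

lemma lt_rowCount_iff (hf : IsStandardTableau Y f) (hc : c ∈ Y.cells) :
    c.2 < rowCount Y f c.1 m ↔ f c ≤ m := by
  constructor
  · intro h
    by_contra! hm
    have hsub : rowWindow Y f c.1 0 m ⊆ (range c.2).image fun k => (c.1, k) := fun d hd => by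
      obtain ⟨hd, ⟨-, hdm⟩, hdr⟩ := mem_rowWindow.1 hd
      refine mem_image.2 ⟨d.2, mem_range.2 (lt_of_not_ge fun hle => ?_), Prod.ext hdr.symm rfl⟩
      have := hf.le_of_fst_eq hc hd hdr.symm hle
      omega
    have := (card_le_card hsub).trans card_image_le
    rw [card_range] at this
    exact absurd h (not_lt.2 this)
  · intro hm
    have hsub : (range (c.2 + 1)).image (fun k => (c.1, k)) ⊆ rowWindow Y f c.1 0 m := by
      intro d hd
      obtain ⟨k, hk, rfl⟩ := mem_image.1 hd
      have hkc : (c.1, k) ∈ Y.cells := Y.up_left_mem le_rfl (Nat.lt_succ_iff.1 (mem_range.1 hk)) hc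
      have := hf.le_of_fst_eq hkc hc rfl (Nat.lt_succ_iff.1 (mem_range.1 hk))
      exact mem_rowWindow.2 ⟨hkc, ⟨hf.pos hkc, by omega⟩, rfl⟩
    have := card_le_card hsub
    rw [card_image_of_injective _ fun k k' h => (Prod.mk.inj h).2, card_range] at this
    exact this

lemma eq_of_rowCount_eq (hf : IsStandardTableau Y f) (hg : IsStandardTableau Y g)
    (h : ∀ c ∈ Y.cells, ∀ m ≤ Y.card, rowCount Y f c.1 m = rowCount Y g c.1 m) :
    ∀ c ∈ Y.cells, g c = f c := by
  intro c hc
  have key : ∀ m ≤ Y.card, f c ≤ m ↔ g c ≤ m := fun m hm => by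
    rw [← hf.lt_rowCount_iff hc, ← hg.lt_rowCount_iff hc, h c hc m hm]
  exact le_antisymm ((key _ (hf.le_card hc)).1 le_rfl) ((key _ (hg.le_card hc)).2 le_rfl)

end IsStandardTableau

def IsReadingChain (f : ℕ × ℕ → ℕ) (D : Finset (ℕ × ℕ)) : Prop :=
  ∀ c ∈ D, ∀ c' ∈ D, c ≠ c' → (ReadLT c c' ∧ f c < f c') ∨ (ReadLT c' c ∧ f c' < f c)

lemma IsReadingChain.lt_of_fst_lt {f : ℕ × ℕ → ℕ} {D : Finset (ℕ × ℕ)} {c c' : ℕ × ℕ}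
    (hD : IsReadingChain f D) (hc : c ∈ D) (hc' : c' ∈ D) (h : c'.1 < c.1) : f c < f c' := by
  rcases hD c hc c' hc' (by rintro rfl; omega) with ⟨-, hlt⟩ | ⟨hread, -⟩
  · exact hlt
  · rcases hread with h' | ⟨h', -⟩ <;> omega

lemma IsStandardTableau.isReadingChain {Y : YoungDiagram} {f : ℕ × ℕ → ℕ}
    {D : Finset (ℕ × ℕ)} (hf : IsStandardTableau Y f) (hD : D ⊆ Y.cells)
    (hrows : ∀ c ∈ D, ∀ c' ∈ D, c'.1 < c.1 → f c < f c') : IsReadingChain f D := by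
  intro c hc c' hc' hne
  rcases lt_trichotomy c'.1 c.1 with h | h | h
  · exact .inl ⟨.inl h, hrows c hc c' hc' h⟩
  · rcases lt_trichotomy c.2 c'.2 with h₂ | h₂ | h₂
    · exact .inl ⟨.inr ⟨h.symm, h₂⟩, hf.lt_of_fst_eq (hD hc) (hD hc') h.symm h₂⟩
    · exact absurd (Prod.ext h.symm h₂) hne
    · exact .inr ⟨.inr ⟨h, h₂⟩, hf.lt_of_fst_eq (hD hc') (hD hc) h h₂⟩
  · exact .inr ⟨.inl h, hrows c' hc' c hc h⟩

def IsChainFamily (Y : YoungDiagram) (f : ℕ × ℕ → ℕ) (i j : ℕ) {k : ℕ}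
    (C : Fin k → Finset (ℕ × ℕ)) : Prop :=
  (∀ l, C l ⊆ Y.cells) ∧ (∀ l l', l ≠ l' → Disjoint (C l) (C l')) ∧
    (∀ l, ∀ c ∈ C l, i < f c ∧ f c ≤ j) ∧ ∀ l, IsReadingChain f (C l)

section Greene

variable {Y : YoungDiagram} {f : ℕ × ℕ → ℕ} {i j k : ℕ} {C : Fin k → Finset (ℕ × ℕ)}

lemma greene_eq_sSup : greene Y f i j k =
    sSup {m | ∃ C : Fin k → Finset (ℕ × ℕ), IsChainFamily Y f i j C ∧ m = ∑ l, #(C l)} := by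
  simp only [greene, IsChainFamily, IsReadingChain, and_assoc]

lemma IsChainFamily.sum_card_le (hC : IsChainFamily Y f i j C) :
    ∑ l, #(C l) ≤ #(entryWindow Y f i j) := by
  rw [← card_biUnion fun l _ l' _ h => hC.2.1 l l' h]
  refine card_le_card fun c hc => ?_
  obtain ⟨l, -, hcl⟩ := mem_biUnion.1 hc
  exact mem_entryWindow.2 ⟨hC.1 l hcl, hC.2.2.1 l c hcl⟩

lemma bddAbove_chainFamily_sizes : BddAbove
    {m | ∃ C : Fin k → Finset (ℕ × ℕ), IsChainFamily Y f i j C ∧ m = ∑ l, #(C l)} :=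
  ⟨_, by rintro m ⟨C, hC, rfl⟩; exact hC.sum_card_le⟩

lemma IsChainFamily.sum_card_le_greene (hC : IsChainFamily Y f i j C) :
    ∑ l, #(C l) ≤ greene Y f i j k := by
  rw [greene_eq_sSup]
  exact le_csSup bddAbove_chainFamily_sizes ⟨C, hC, rfl⟩

lemma exists_isChainFamily_greene_eq (Y : YoungDiagram) (f : ℕ × ℕ → ℕ) (i j k : ℕ) :
    ∃ C : Fin k → Finset (ℕ × ℕ), IsChainFamily Y f i j C ∧ greene Y f i j k = ∑ l, #(C l) := by
  have hempty : IsChainFamily Y f i j fun _ : Fin k => (∅ : Finset (ℕ × ℕ)) :=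
    ⟨fun _ => empty_subset _, fun _ _ _ => disjoint_empty_left _, by simp, by simp [IsReadingChain]⟩
  rw [greene_eq_sSup]
  exact Nat.sSup_mem ⟨0, by exact ⟨_, hempty, by simp⟩⟩ bddAbove_chainFamily_sizes

lemma greene_le_card_entryWindow : greene Y f i j k ≤ #(entryWindow Y f i j) := by
  obtain ⟨C, hC, h⟩ := exists_isChainFamily_greene_eq Y f i j k
  exact h ▸ hC.sum_card_le

@[simp]
lemma greene_zero : greene Y f i j 0 = 0 := by
  obtain ⟨C, -, h⟩ := exists_isChainFamily_greene_eq Y f i j 0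
  simpa using h

end Greene

def twoRowChain (Y : YoungDiagram) (f : ℕ × ℕ → ℕ) (i s j : ℕ) : Finset (ℕ × ℕ) :=
  rowWindow Y f 1 i s ∪ rowWindow Y f 0 s j

-- When `a m` counts the first-row entries `≤ m`, this counts the second-row entries in `(i, s]`
-- plus the first-row entries in `(s, j]`.
def twoRowChainLen (a : ℕ → ℕ) (i s j : ℕ) : ℤ :=
  ((s : ℤ) - i) - ((a s : ℤ) - a i) + ((a j : ℤ) - a s)

namespace IsStandardTableau

variable {Y : YoungDiagram} {f : ℕ × ℕ → ℕ} {i s j k : ℕ}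

lemma greene_eq_card_entryWindow (hf : IsStandardTableau Y f) (htr : ∀ c ∈ Y.cells, c.1 ≤ 1)
    (hk : 2 ≤ k) : greene Y f i j k = #(entryWindow Y f i j) := by
  have hC : IsChainFamily Y f i j fun l : Fin k => rowWindow Y f l i j := by
    refine ⟨fun l c hc => (mem_rowWindow.1 hc).1, fun l l' hll' => ?_,
      fun l c hc => (mem_rowWindow.1 hc).2.1, fun l => hf.isReadingChain
        (fun c hc => (mem_rowWindow.1 hc).1) fun c hc c' hc' h => ?_⟩
    · refine disjoint_left.2 fun c hc hc' => hll' (Fin.ext ?_)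
      exact (mem_rowWindow.1 hc).2.2.symm.trans (mem_rowWindow.1 hc').2.2
    · rw [(mem_rowWindow.1 hc).2.2, (mem_rowWindow.1 hc').2.2] at h
      exact absurd h (lt_irrefl _)
  refine le_antisymm greene_le_card_entryWindow ?_
  calc #(entryWindow Y f i j) = ∑ r ∈ range k, #(rowWindow Y f r i j) :=
        card_entryWindow_eq_sum fun c hc => by have := htr c hc; omega
    _ = ∑ l : Fin k, #(rowWindow Y f l i j) := (Fin.sum_univ_eq_sum_range _ k).symm
    _ ≤ greene Y f i j k := hC.sum_card_le_greene

lemma card_twoRowChain_le_greene (hf : IsStandardTableau Y f) (his : i ≤ s) (hsj : s ≤ j) :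
    #(twoRowChain Y f i s j) ≤ greene Y f i j 1 := by
  have hmem : ∀ c ∈ twoRowChain Y f i s j, c ∈ Y.cells ∧
      (c.1 = 1 ∧ i < f c ∧ f c ≤ s ∨ c.1 = 0 ∧ s < f c ∧ f c ≤ j) := fun c hc => by
    rcases mem_union.1 hc with hc | hc <;> obtain ⟨hc, hv, hr⟩ := mem_rowWindow.1 hc
    exacts [⟨hc, .inl ⟨hr, hv⟩⟩, ⟨hc, .inr ⟨hr, hv⟩⟩]
  have hC : IsChainFamily Y f i j fun _ : Fin 1 => twoRowChain Y f i s j := by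
    refine ⟨fun _ c hc => (hmem c hc).1, fun l l' h => absurd (Subsingleton.elim l l') h,
      fun _ c hc => by have := (hmem c hc).2; omega,
      fun _ => hf.isReadingChain (fun c hc => (hmem c hc).1) fun c hc c' hc' h => ?_⟩
    have := (hmem c hc).2
    have := (hmem c' hc').2
    omega
  simpa using hC.sum_card_le_greene

lemma card_twoRowChain (hf : IsStandardTableau Y f) (htr : ∀ c ∈ Y.cells, c.1 ≤ 1) (his : i ≤ s)
    (hsj : s ≤ j) (hj : j ≤ Y.card) :
    (#(twoRowChain Y f i s j) : ℤ) = twoRowChainLen (rowCount Y f 0) i s j := by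
  have hrow₁ := card_rowWindow_add (Y := Y) (f := f) (r := 1) (Nat.zero_le i) his
  have hrow₀ := card_rowWindow_add (Y := Y) (f := f) (r := 0) (Nat.zero_le s) hsj
  have hi := hf.rowCount_zero_add_rowCount_one htr (his.trans (hsj.trans hj))
  have hs := hf.rowCount_zero_add_rowCount_one htr (hsj.trans hj)
  have hdisj : Disjoint (rowWindow Y f 1 i s) (rowWindow Y f 0 s j) :=
    disjoint_left.2 fun c hc hc' => by
      have := (mem_rowWindow.1 hc).2.2
      have := (mem_rowWindow.1 hc').2.2
      omega
  rw [twoRowChain, card_union_of_disjoint hdisj]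
  unfold twoRowChainLen rowCount at *
  push_cast
  omega

end IsStandardTableau

lemma exists_greene_le_card_twoRowChain {Y : YoungDiagram} {f : ℕ × ℕ → ℕ} {i j : ℕ}
    (htr : ∀ c ∈ Y.cells, c.1 ≤ 1) (hij : i ≤ j) :
    ∃ s ∈ Set.Icc i j, greene Y f i j 1 ≤ #(twoRowChain Y f i s j) := by
  obtain ⟨C, ⟨hsub, -, hval, hchain⟩, hC⟩ := exists_isChainFamily_greene_eq Y f i j 1
  -- A reading chain reads its second-row cells first, so it splits at its largest second-row entry.
  let s := max i (((C 0).filter fun c => c.1 = 1).sup f)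
  refine ⟨s, ⟨le_max_left _ _, max_le hij (Finset.sup_le fun c hc => ?_)⟩, ?_⟩
  · exact (hval 0 c (mem_filter.1 hc).1).2
  rw [hC, Fin.sum_univ_one]
  refine card_le_card fun c hc => ?_
  have hcY := hsub 0 hc
  have hcv := hval 0 c hc
  rcases Nat.le_one_iff_eq_zero_or_eq_one.1 (htr c hcY) with h | h
  · have hsup : ((C 0).filter (fun c => c.1 = 1)).sup f < f c :=
      (Finset.sup_lt_iff (by rw [Nat.bot_eq_zero]; omega)).2 fun d hd =>
        (hchain 0).lt_of_fst_lt (mem_filter.1 hd).1 hc (by rw [h, (mem_filter.1 hd).2]; omega)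
    exact mem_union_right _ (mem_rowWindow.2 ⟨hcY, ⟨max_lt hcv.1 hsup, hcv.2⟩, h⟩)
  · exact mem_union_left _ (mem_rowWindow.2
      ⟨hcY, ⟨hcv.1, le_max_of_le_right (le_sup (mem_filter.2 ⟨hc, h⟩))⟩, h⟩)

lemma YoungDiagram.rowLen_ofRowLens_eq_getD (w : List ℕ) (hw : w.SortedGE) (l : ℕ) :
    (YoungDiagram.ofRowLens w hw).rowLen l = w.getD l 0 := by
  refine eq_of_forall_lt_iff fun k => ?_
  rw [← YoungDiagram.mem_iff_lt_rowLen, YoungDiagram.mem_ofRowLens]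
  by_cases hl : l < w.length <;> simp [hl]

lemma IsStandardTableau.exists_isRectifiedShape {Y : YoungDiagram} {f : ℕ × ℕ → ℕ} {i j : ℕ}
    (hf : IsStandardTableau Y f) (htr : ∀ c ∈ Y.cells, c.1 ≤ 1) (hij : i ≤ j) :
    ∃ Z, IsRectifiedShape Y f i j Z := by
  set L := greene Y f i j 1
  set M := #(entryWindow Y f i j)
  have hLM : L ≤ M := greene_le_card_entryWindow
  have hrow₀ : #(rowWindow Y f 0 i j) ≤ L := by
    simpa [twoRowChain] using hf.card_twoRowChain_le_greene le_rfl hij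
  have hrow₁ : #(rowWindow Y f 1 i j) ≤ L := by
    simpa [twoRowChain] using hf.card_twoRowChain_le_greene hij le_rfl
  have hM : M = #(rowWindow Y f 0 i j) + #(rowWindow Y f 1 i j) := card_entryWindow_eq_add htr
  have hsorted : List.SortedGE [L, M - L] := by
    rw [List.sortedGE_iff_pairwise, List.pairwise_pair]
    omega
  refine ⟨.ofRowLens [L, M - L] hsorted, fun k => ?_⟩
  simp only [YoungDiagram.rowLen_ofRowLens_eq_getD]
  match k with
  | 0 => simp
  | 1 => simp [L]
  | k + 2 =>
    rw [hf.greene_eq_card_entryWindow htr (by omega), sum_range_succ', sum_range_succ']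
    simp only [List.getD_cons_succ, List.getD_cons_zero, List.getD_nil, sum_const_zero]
    omega

section BallotPaths

variable {a b : ℕ → ℕ} {n : ℕ}

lemma le_of_twoRowChainLen_le (ha₀ : a 0 = 0) (hb₀ : b 0 = 0) (hballot : ∀ m ≤ n, m ≤ 2 * a m)
    (hdom : ∀ i j, i < j → j ≤ n → ∀ t ∈ Set.Icc i j, ∃ s ∈ Set.Icc i j,
      twoRowChainLen b i t j ≤ twoRowChainLen a i s j)
    {m : ℕ} (hm : m ≤ n) : b m ≤ a m := by
  rcases m.eq_zero_or_pos with rfl | hpos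
  · omega
  obtain ⟨s, hs, hle⟩ := hdom 0 m hpos hm 0 ⟨le_rfl, hpos.le⟩
  have := hballot s (hs.2.trans hm)
  unfold twoRowChainLen at hle
  omega

lemma exists_lt_of_excursion (ha : ∀ m, a (m + 1) = a m ∨ a (m + 1) = a m + 1)
    (hb : ∀ m, b (m + 1) = b m ∨ b (m + 1) = b m + 1) {m j : ℕ} (hmj : m + 1 < j)
    (hm : a m = b m) (hj : a j = b j) (hlt : ∀ t, m < t → t < j → b t < a t) :
    ∀ s ∈ Set.Icc m j, ∃ u ∈ Set.Icc m j, 2 * (b u : ℤ) - u < 2 * a s - s := by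
  rintro s ⟨hms, hsj⟩
  rcases hms.eq_or_lt with rfl | hms
  · refine ⟨m + 1, ⟨by omega, by omega⟩, ?_⟩
    have := hlt (m + 1) (by omega) hmj
    rcases ha m with h | h <;> rcases hb m with h' | h' <;> omega
  rcases hsj.eq_or_lt with rfl | hsj
  · obtain ⟨k, rfl⟩ : ∃ k, s = k + 1 := ⟨s - 1, by omega⟩
    refine ⟨k, ⟨by omega, by omega⟩, ?_⟩
    have := hlt k (by omega) (by omega)
    rcases ha k with h | h <;> rcases hb k with h' | h' <;> omega
  · exact ⟨s, ⟨hms.le, hsj.le⟩, by have := hlt s hms hsj; omega⟩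

theorem eq_of_twoRowChainLen_le (ha₀ : a 0 = 0) (hb₀ : b 0 = 0)
    (ha : ∀ m, a (m + 1) = a m ∨ a (m + 1) = a m + 1)
    (hb : ∀ m, b (m + 1) = b m ∨ b (m + 1) = b m + 1)
    (hballot : ∀ m ≤ n, m ≤ 2 * a m) (hn : a n = b n)
    (hdom : ∀ i j, i < j → j ≤ n → ∀ t ∈ Set.Icc i j, ∃ s ∈ Set.Icc i j,
      twoRowChainLen b i t j ≤ twoRowChainLen a i s j) :
    ∀ m ≤ n, a m = b m := by
  have hle : ∀ m ≤ n, b m ≤ a m := fun m => le_of_twoRowChainLen_le ha₀ hb₀ hballot hdom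
  intro m
  induction m with
  | zero => exact fun _ => ha₀.trans hb₀.symm
  | succ m ih =>
    intro hm
    have hmm := ih (by omega)
    by_contra hne
    have hup : b (m + 1) < a (m + 1) := lt_of_le_of_ne (hle _ hm) (Ne.symm hne)
    have hmn : m + 1 < n := lt_of_le_of_ne hm fun h => by subst h; omega
    have hex : ∃ j, m + 1 < j ∧ a j ≤ b j := ⟨n, hmn, hn.le⟩
    classical
    -- `j` ends the first excursion of `b` strictly below `a` after `m`.
    set j := Nat.find hex
    obtain ⟨hmj, hj⟩ : m + 1 < j ∧ a j ≤ b j := Nat.find_spec hex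
    have hjn : j ≤ n := Nat.find_min' hex ⟨hmn, hn.le⟩
    have hlt : ∀ t, m < t → t < j → b t < a t := fun t h₁ h₂ => by
      rcases (Nat.succ_le_of_lt h₁).eq_or_lt with rfl | h₁
      · exact hup
      · exact lt_of_not_ge fun h => Nat.find_min hex h₂ ⟨h₁, h⟩
    obtain ⟨t, ht, htmin⟩ := (Icc m j).exists_min_image
      (fun u => 2 * (b u : ℤ) - u) ⟨m, mem_Icc.2 ⟨le_rfl, by omega⟩⟩
    obtain ⟨s, hs, hts⟩ := hdom m j (by omega) hjn t (by simpa using ht)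
    obtain ⟨u, hu, hus⟩ := exists_lt_of_excursion ha hb hmj hmm
      (le_antisymm hj (hle _ hjn)) hlt s hs
    have := htmin u (by simpa using hu)
    unfold twoRowChainLen at hts
    omega

end BallotPaths

/-- two distinct standard tableaux of a common two-row shape are
distinguished by some rectified shape `Y^·_{j/i}`; precisely, if `T = (Y, f)` and
`S = (Y, g)` are two-row standard tableaux and `Y^S_{j/i} ⪯ Y^T_{j/i}` (dominance,
via partial row sums) for all `0 ≤ i < j ≤ n`, then `T = S`. -/
theorem stmt_19 (Y : YoungDiagram) (htr : ∀ c ∈ Y.cells, c.1 ≤ 1)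
    (f g : ℕ × ℕ → ℕ) (hf : IsStandardTableau Y f) (hg : IsStandardTableau Y g)
    (hdom : ∀ i j : ℕ, i < j → j ≤ Y.card →
      ∀ Zf Zg : YoungDiagram, IsRectifiedShape Y f i j Zf → IsRectifiedShape Y g i j Zg →
        ∀ p : ℕ, ∑ l ∈ Finset.range p, Zg.rowLen l ≤ ∑ l ∈ Finset.range p, Zf.rowLen l) :
    ∀ c ∈ Y.cells, g c = f c := by
  have hgreene : ∀ i j, i < j → j ≤ Y.card → greene Y g i j 1 ≤ greene Y f i j 1 := by
    intro i j hij hj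
    obtain ⟨Zf, hZf⟩ := hf.exists_isRectifiedShape htr hij.le
    obtain ⟨Zg, hZg⟩ := hg.exists_isRectifiedShape htr hij.le
    have := hdom i j hij hj Zf Zg hZf hZg 1
    rwa [hZf 1, hZg 1] at this
  have hrow₀ : ∀ m ≤ Y.card, rowCount Y f 0 m = rowCount Y g 0 m := by
    refine eq_of_twoRowChainLen_le rowCount_zero rowCount_zero (hf.rowCount_succ 0) (hg.rowCount_succ 0)
      (fun m => hf.le_two_mul_rowCount_zero htr) (by rw [hf.rowCount_card, hg.rowCount_card]) ?_
    intro i j hij hj t ht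
    obtain ⟨s, hs, hfs⟩ := exists_greene_le_card_twoRowChain (f := f) htr hij.le
    refine ⟨s, hs, ?_⟩
    rw [← hg.card_twoRowChain htr ht.1 ht.2 hj, ← hf.card_twoRowChain htr hs.1 hs.2 hj]
    exact_mod_cast (hg.card_twoRowChain_le_greene ht.1 ht.2).trans ((hgreene i j hij hj).trans hfs)
  refine hf.eq_of_rowCount_eq hg fun c hc m hm => ?_
  rcases Nat.le_one_iff_eq_zero_or_eq_one.1 (htr c hc) with h | h <;> rw [h]
  · exact hrow₀ m hm
  · have := hf.rowCount_zero_add_rowCount_one htr hm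
    have := hg.rowCount_zero_add_rowCount_one htr hm
    have := hrow₀ m hm
    omega
end
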